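/- arXiv:2110.13072 — 3 statements merged into one kernel-verified Lean document; each statement's English description precedes it below -/
import Mathlib

section
/- For every choice of parameters a, b, c ∈ ℂ, there exists a non-constant formal power series F̂ ∈ ℂ[[x,y₁,y₂]] satisfying x²·∂F̂/∂x + ((1+ax)y₁ + bxy₂)·∂F̂/∂y₁ + (cxy₁ − (1+ax)y₂)·∂F̂/∂y₂ = 0 as a formal power series in x, y₁, y₂; that is, the vector field X_{a,b,c} possesses a non-constant formal first integral. -/
/-- Formal partial derivative of a multivariate formal power series with
respect to the `i`-th variable: the coefficient of the derivative at a
multi-index `d` is `(d i + 1)` times the coefficient of the series at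
`d + single i 1`. -/
noncomputable def mvPderiv {n : ℕ} (i : Fin n) (F : MvPowerSeries (Fin n) ℂ) :
    MvPowerSeries (Fin n) ℂ :=
  fun d => ((d i : ℕ) + 1 : ℂ) * MvPowerSeries.coeff (R := ℂ) (d + Finsupp.single i 1) F

open MvPowerSeries

/-! We look for the first integral as a quadratic form `A(x) y₁² + B(x) y₁y₂ + C(x) y₂²`.
Applying `X_{a,b,c}` to it gives again a quadratic form in `y`, which vanishes exactly when
`x²A' + 2(1+ax)A + cxB = 0`, `x²B' + 2bxA + 2cxC = 0` and `x²C' + bxB − 2(1+ax)C = 0`.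
Since the derivatives carry the factor `x²`, comparing coefficients of `xⁿ⁺¹` turns this
system into a recursion giving `(Aₙ₊₁, Bₙ₊₁, Cₙ₊₁)` from `(Aₙ, Bₙ, Cₙ)`, where the only
division is by `2` or `n + 1`. Starting from `(A₀, B₀, C₀) = (0, 1, 0)` gives a solution, and
`B(0) = 1` makes the integral non-constant. -/

namespace MvPowerSeries

open Finsupp

variable {σ τ R : Type*} [CommSemiring R]

theorem pderiv_rename_of_notMem_range (f : σ → τ) [Filter.TendstoCofinite f] {j : τ}
    (hj : j ∉ Set.range f) (p : MvPowerSeries σ R) : pderiv R j (rename f p) = 0 := by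
  ext d
  refine (coeff_pderiv _ d).trans ?_
  rw [coeff_rename_eq_zero, zero_mul, map_zero]
  rintro ⟨y, hy⟩
  simpa [mapDomain_of_notMem_range y j hj] using congr($hy j).symm

theorem pderiv_rename_embedding (e : σ ↪ τ) (i : σ) (p : MvPowerSeries σ R) :
    pderiv R (e i) (rename e p) = rename e (pderiv R i p) := by
  ext d
  rw [coeff_pderiv]
  by_cases hd : d ∈ Set.range (mapDomain e)
  · obtain ⟨y, rfl⟩ := hd
    rw [← embDomain_eq_mapDomain, ← embDomain_single, ← embDomain_add, coeff_embDomain_rename,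
      coeff_embDomain_rename, coeff_pderiv, embDomain_apply_self]
  · have hd' : d + single (e i) 1 ∉ Set.range (mapDomain e) := by
      have hsingle : ∀ b ∉ Set.range e, single (e i) 1 b = 0 := fun b hb =>
        single_eq_of_ne (fun h => hb ⟨i, h.symm⟩)
      simp_all [mem_range_mapDomain_iff _ e.injective]
    rw [coeff_rename_eq_zero _ _ hd', zero_mul, coeff_rename_eq_zero _ _ hd]

end MvPowerSeries

namespace PowerSeries

variable {σ R : Type*} [CommSemiring R]

theorem pderiv_toMvPowerSeries_self (i : σ) (f : R⟦X⟧) :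
    MvPowerSeries.pderiv R i (f.toMvPowerSeries i) = (derivative R f).toMvPowerSeries i :=
  MvPowerSeries.pderiv_rename_embedding (Function.Embedding.punit i) () f

theorem pderiv_toMvPowerSeries_of_ne {i j : σ} (h : j ≠ i) (f : R⟦X⟧) :
    MvPowerSeries.pderiv R j (f.toMvPowerSeries i) = 0 :=
  MvPowerSeries.pderiv_rename_of_notMem_range _ (by rintro ⟨_, rfl⟩; exact h rfl) f

theorem coeff_succ_X_sq_mul_derivative (f : R⟦X⟧) (n : ℕ) :
    coeff (n + 1) (X ^ 2 * derivative R f) = n * coeff n f := by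
  rw [pow_two, mul_assoc, coeff_succ_X_mul]
  cases n with
  | zero => simp
  | succ n => rw [coeff_succ_X_mul, coeff_derivative, mul_comm]; push_cast; rfl

end PowerSeries

theorem mvPderiv_eq_pderiv {n : ℕ} (i : Fin n) (F : MvPowerSeries (Fin n) ℂ) :
    mvPderiv i F = pderiv ℂ i F := by
  ext d
  rw [coeff_pderiv]
  exact mul_comm _ _

noncomputable def lieDerivative (a b c : ℂ) (F : MvPowerSeries (Fin 3) ℂ) :
    MvPowerSeries (Fin 3) ℂ :=
  X 0 ^ 2 * mvPderiv 0 F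
    + ((1 + C a * X 0) * X 1 + C b * X 0 * X 2) * mvPderiv 1 F
    + (C c * X 0 * X 1 - (1 + C a * X 0) * X 2) * mvPderiv 2 F

noncomputable def quadraticInY (A B C : PowerSeries ℂ) : MvPowerSeries (Fin 3) ℂ :=
  A.toMvPowerSeries 0 * X 1 ^ 2 + B.toMvPowerSeries 0 * X 1 * X 2 + C.toMvPowerSeries 0 * X 2 ^ 2

section quadraticInY

variable (A B C : PowerSeries ℂ)

theorem pderiv_zero_quadraticInY :
    pderiv ℂ 0 (quadraticInY A B C) = quadraticInY (PowerSeries.derivative ℂ A)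
      (PowerSeries.derivative ℂ B) (PowerSeries.derivative ℂ C) := by
  simp [quadraticInY, PowerSeries.pderiv_toMvPowerSeries_self]
  ring

theorem pderiv_one_quadraticInY :
    pderiv ℂ 1 (quadraticInY A B C) =
      2 * A.toMvPowerSeries 0 * X 1 + B.toMvPowerSeries 0 * X 2 := by
  simp [quadraticInY, PowerSeries.pderiv_toMvPowerSeries_of_ne]
  ring

theorem pderiv_two_quadraticInY :
    pderiv ℂ 2 (quadraticInY A B C) =
      B.toMvPowerSeries 0 * X 1 + 2 * C.toMvPowerSeries 0 * X 2 := by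
  simp [quadraticInY, PowerSeries.pderiv_toMvPowerSeries_of_ne]
  ring

end quadraticInY

theorem lieDerivative_quadraticInY_eq_zero {a b c : ℂ} {A B C : PowerSeries ℂ}
    (hA : PowerSeries.X ^ 2 * PowerSeries.derivative ℂ A
      + 2 * (1 + PowerSeries.C a * PowerSeries.X) * A + PowerSeries.C c * PowerSeries.X * B = 0)
    (hB : PowerSeries.X ^ 2 * PowerSeries.derivative ℂ B
      + 2 * PowerSeries.C b * PowerSeries.X * A + 2 * PowerSeries.C c * PowerSeries.X * C = 0)
    (hC : PowerSeries.X ^ 2 * PowerSeries.derivative ℂ C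
      + PowerSeries.C b * PowerSeries.X * B - 2 * (1 + PowerSeries.C a * PowerSeries.X) * C = 0) :
    lieDerivative a b c (quadraticInY A B C) = 0 := by
  replace hA := congr(PowerSeries.toMvPowerSeries (0 : Fin 3) $hA)
  replace hB := congr(PowerSeries.toMvPowerSeries (0 : Fin 3) $hB)
  replace hC := congr(PowerSeries.toMvPowerSeries (0 : Fin 3) $hC)
  simp only [map_add, map_sub, map_mul, map_pow, map_ofNat, map_one, map_zero,
    PowerSeries.toMvPowerSeries_X, PowerSeries.toMvPowerSeries_C] at hA hB hC
  rw [lieDerivative, mvPderiv_eq_pderiv, mvPderiv_eq_pderiv, mvPderiv_eq_pderiv,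
    pderiv_zero_quadraticInY, pderiv_one_quadraticInY, pderiv_two_quadraticInY, quadraticInY]
  linear_combination X 1 ^ 2 * hA + X 1 * X 2 * hB + X 2 ^ 2 * hC

theorem quadraticInY_ne_C {A B C : PowerSeries ℂ} (hB : PowerSeries.constantCoeff B ≠ 0) (k : ℂ) :
    quadraticInY A B C ≠ MvPowerSeries.C k := by
  intro h
  have hmixed := congr(constantCoeff (pderiv ℂ 2 (pderiv ℂ 1 $h)))
  simp [pderiv_one_quadraticInY, PowerSeries.pderiv_toMvPowerSeries_of_ne] at hmixed
  rw [PowerSeries.toMvPowerSeries_apply, constantCoeff_rename] at hmixed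
  exact hB hmixed

-- `(Aₙ, Bₙ, Cₙ)`: `Aₙ₊₁` and `Cₙ₊₁` are read off the coefficient of `xⁿ⁺¹` in the `A`- and
-- `C`-equations, `Bₙ₊₁` off that of `xⁿ⁺²` in the `B`-equation.
noncomputable def firstIntegralCoeffs (a b c : ℂ) : ℕ → ℂ × ℂ × ℂ
  | 0 => (0, 1, 0)
  | n + 1 =>
    let (α, β, γ) := firstIntegralCoeffs a b c n
    let α' := -((n + 2 * a) * α + c * β) / 2
    let γ' := ((n - 2 * a) * γ + b * β) / 2
    (α', -2 * (b * α' + c * γ') / (n + 1), γ')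

section firstIntegralSeries

variable (a b c : ℂ)

noncomputable def seriesA : PowerSeries ℂ :=
  PowerSeries.mk fun n => (firstIntegralCoeffs a b c n).1

noncomputable def seriesB : PowerSeries ℂ :=
  PowerSeries.mk fun n => (firstIntegralCoeffs a b c n).2.1

noncomputable def seriesC : PowerSeries ℂ :=
  PowerSeries.mk fun n => (firstIntegralCoeffs a b c n).2.2

theorem coeff_seriesA_recurrence (n : ℕ) :
    2 * PowerSeries.coeff (n + 1) (seriesA a b c)
      + (n + 2 * a) * PowerSeries.coeff n (seriesA a b c)
      + c * PowerSeries.coeff n (seriesB a b c) = 0 := by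
  simp only [seriesA, seriesB, PowerSeries.coeff_mk, firstIntegralCoeffs]
  ring

theorem coeff_seriesC_recurrence (n : ℕ) :
    2 * PowerSeries.coeff (n + 1) (seriesC a b c)
      - (n - 2 * a) * PowerSeries.coeff n (seriesC a b c)
      - b * PowerSeries.coeff n (seriesB a b c) = 0 := by
  simp only [seriesC, seriesB, PowerSeries.coeff_mk, firstIntegralCoeffs]
  ring

theorem coeff_seriesB_relation (n : ℕ) :
    n * PowerSeries.coeff n (seriesB a b c) + 2 * b * PowerSeries.coeff n (seriesA a b c)
      + 2 * c * PowerSeries.coeff n (seriesC a b c) = 0 := by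
  cases n with
  | zero => simp [seriesA, seriesB, seriesC, firstIntegralCoeffs]
  | succ n =>
    simp only [seriesA, seriesB, seriesC, PowerSeries.coeff_mk, firstIntegralCoeffs,
      Nat.cast_add_one]
    field_simp
    ring

theorem seriesA_ode : PowerSeries.X ^ 2 * PowerSeries.derivative ℂ (seriesA a b c)
    + 2 * (1 + PowerSeries.C a * PowerSeries.X) * seriesA a b c
    + PowerSeries.C c * PowerSeries.X * seriesB a b c = 0 := by
  rw [← map_ofNat PowerSeries.C 2]
  ext n
  cases n with
  | zero => simp [seriesA, firstIntegralCoeffs]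
  | succ n =>
    simp only [map_add, mul_add, add_mul, mul_assoc, mul_one, PowerSeries.coeff_C_mul,
      PowerSeries.coeff_succ_X_mul, PowerSeries.coeff_succ_X_sq_mul_derivative, map_zero]
    linear_combination coeff_seriesA_recurrence a b c n

theorem seriesB_ode : PowerSeries.X ^ 2 * PowerSeries.derivative ℂ (seriesB a b c)
    + 2 * PowerSeries.C b * PowerSeries.X * seriesA a b c
    + 2 * PowerSeries.C c * PowerSeries.X * seriesC a b c = 0 := by
  rw [← map_ofNat PowerSeries.C 2]
  ext n
  cases n with
  | zero => simp
  | succ n =>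
    simp only [map_add, mul_assoc, PowerSeries.coeff_C_mul,
      PowerSeries.coeff_succ_X_mul, PowerSeries.coeff_succ_X_sq_mul_derivative, map_zero]
    linear_combination coeff_seriesB_relation a b c n

theorem seriesC_ode : PowerSeries.X ^ 2 * PowerSeries.derivative ℂ (seriesC a b c)
    + PowerSeries.C b * PowerSeries.X * seriesB a b c
    - 2 * (1 + PowerSeries.C a * PowerSeries.X) * seriesC a b c = 0 := by
  rw [← map_ofNat PowerSeries.C 2]
  ext n
  cases n with
  | zero => simp [seriesC, firstIntegralCoeffs]
  | succ n =>
    simp only [map_add, map_sub, mul_add, add_mul, mul_assoc, mul_one, PowerSeries.coeff_C_mul,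
      PowerSeries.coeff_succ_X_mul, PowerSeries.coeff_succ_X_sq_mul_derivative, map_zero]
    linear_combination -coeff_seriesC_recurrence a b c n

end firstIntegralSeries

/-- for all `a b c : ℂ`, the vector field
`X_{a,b,c} = x² ∂ₓ + ((1+ax)y₁ + bxy₂) ∂_{y₁} + (cxy₁ − (1+ax)y₂) ∂_{y₂}`
possesses a non-constant formal first integral `F̂ ∈ ℂ[[x,y₁,y₂]]`. -/
theorem stmt1 (a b c : ℂ) :
    ∃ F : MvPowerSeries (Fin 3) ℂ,
      (¬ ∃ k : ℂ, F = MvPowerSeries.C (σ := Fin 3) (R := ℂ) k) ∧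
      (X 0 : MvPowerSeries (Fin 3) ℂ) ^ 2 * mvPderiv 0 F
        + ((1 + C (σ := Fin 3) (R := ℂ) a * X 0) * X 1 + C (σ := Fin 3) (R := ℂ) b * X 0 * X 2) * mvPderiv 1 F
        + (C (σ := Fin 3) (R := ℂ) c * X 0 * X 1 - (1 + C (σ := Fin 3) (R := ℂ) a * X 0) * X 2) * mvPderiv 2 F
        = 0 :=
  ⟨quadraticInY (seriesA a b c) (seriesB a b c) (seriesC a b c),
    not_exists.mpr (quadraticInY_ne_C (by simp [seriesB, firstIntegralCoeffs])),
    lieDerivative_quadraticInY_eq_zero (seriesA_ode a b c) (seriesB_ode a b c) (seriesC_ode a b c)⟩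
end

section
/- Let a, b, c ∈ ℂ. Let A(x) and D(x) be the 2×2 matrices with entries in the formal power series ring ℂ[[x]] given by A(x) = [[1+ax, bx],[cx, −1−ax]] and D(x) = [[1+ax, 0],[0, −1−ax]]. Then there exists a 2×2 matrix T̂(x) with entries in ℂ[[x]] whose constant term T̂(0) is the identity matrix I, such that x²·(dT̂/dx)(x) = A(x)·T̂(x) − T̂(x)·D(x), where dT̂/dx denotes the entrywise formal derivative. Equivalently, the formal gauge transformation y = T̂(x)u conjugates the linear system x² dy/dx = A(x) y to the diagonal system x² du/dx = D(x) u. -/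
/-!
The equation `x² T' = A T − T D` decouples column by column. In a column of `T` with diagonal
entry `f` and off-diagonal entry `g` it reads `x² g' = (δ + α x) g + γ x f` and `x² f' = β x g`,
where `δ = ±2` is the difference of the eigenvalues of `A(0)`. Comparing coefficients of
`x^(n+1)`, the first equation determines `g_(n+1)` because `δ ≠ 0` (non-resonance), and the
second determines `f_(n+1)` because `n + 1 ≠ 0` in characteristic zero.
-/

open PowerSeries

theorem PowerSeries.coeff_succ_X_sq_mul_derivative_s2 {R : Type*} [CommSemiring R]
    (f : R⟦X⟧) (n : ℕ) : coeff (n + 1) (X ^ 2 * d⁄dX R f) = coeff n f * n := by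
  rcases n with _ | n
  · simp [coeff_X_pow_mul']
  · rw [pow_two, mul_assoc, coeff_succ_X_mul, coeff_succ_X_mul, coeff_derivative]
    push_cast
    rfl

section GaugeColumn

variable {K : Type*} [Field K] [CharZero K]

/-- The coefficients `(f n, g n)` of a gauge column, from `n g_n = δ g_(n+1) + α g_n + γ f_n`
and `(n + 1) f_(n+1) = β g_(n+1)`. -/
noncomputable def gaugeColumnCoeff (δ α β γ : K) : ℕ → K × K
  | 0 => (1, 0)
  | n + 1 =>
    let g := ((n - α) * (gaugeColumnCoeff δ α β γ n).2 - γ * (gaugeColumnCoeff δ α β γ n).1) / δ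
    (β * g / (n + 1), g)

theorem exists_gaugeColumn {δ : K} (hδ : δ ≠ 0) (α β γ : K) :
    ∃ f g : K⟦X⟧, constantCoeff f = 1 ∧ constantCoeff g = 0 ∧
      X ^ 2 * d⁄dX K g = (C δ + C α * X) * g + C γ * X * f ∧
      X ^ 2 * d⁄dX K f = C β * X * g := by
  set u := gaugeColumnCoeff δ α β γ
  refine ⟨mk fun n => (u n).1, mk fun n => (u n).2, rfl, rfl, ?_, ?_⟩
  · ext (_ | n)
    · simp [u, gaugeColumnCoeff]
    · rw [coeff_succ_X_sq_mul_derivative_s2]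
      simp only [add_mul, map_add, coeff_C_mul, mul_assoc, coeff_succ_X_mul, coeff_mk, u,
        gaugeColumnCoeff]
      field_simp
      ring
  · ext (_ | n)
    · simp
    · rw [coeff_succ_X_sq_mul_derivative_s2, mul_assoc, coeff_C_mul, coeff_succ_X_mul, coeff_mk,
        coeff_mk]
      rcases n with _ | n
      · simp [u, gaugeColumnCoeff]
      · simp only [u, gaugeColumnCoeff]
        push_cast
        field_simp

end GaugeColumn

/-- there exists a formal gauge transformation `T̂(x)`, with
`T̂(0) = I`, conjugating the linear system `x² y' = A(x) y` with
`A(x) = [[1+ax, bx],[cx, −1−ax]]` to the diagonal system `x² u' = D(x) u`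
with `D(x) = [[1+ax, 0],[0, −1−ax]]`; i.e. `x² T̂' = A T̂ − T̂ D`. -/
theorem stmt2 (a b c : ℂ) :
    ∃ T : Matrix (Fin 2) (Fin 2) (PowerSeries ℂ),
      -- the constant term of `T̂` is the identity matrix
      T.map (PowerSeries.constantCoeff) = 1 ∧
      -- `x² · dT̂/dx = A(x) · T̂ − T̂ · D(x)` (entrywise formal derivative)
      ((PowerSeries.X : PowerSeries ℂ) ^ 2) • T.map (PowerSeries.derivativeFun) =
        (!![1 + PowerSeries.C a * PowerSeries.X, PowerSeries.C b * PowerSeries.X;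
            PowerSeries.C c * PowerSeries.X, -1 - PowerSeries.C a * PowerSeries.X] : Matrix (Fin 2) (Fin 2) (PowerSeries ℂ)) * T
        - T * (!![1 + PowerSeries.C a * PowerSeries.X, 0;
                  0, -1 - PowerSeries.C a * PowerSeries.X] : Matrix (Fin 2) (Fin 2) (PowerSeries ℂ)) := by
  obtain ⟨r, q, hr₀, hq₀, hq, hr⟩ :=
    exists_gaugeColumn (neg_ne_zero.2 two_ne_zero) (-2 * a) b c
  obtain ⟨s, p, hs₀, hp₀, hp, hs⟩ := exists_gaugeColumn two_ne_zero (2 * a) c b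
  simp only [map_neg, map_mul, map_ofNat] at hp hq
  refine ⟨!![r, p; q, s], ?_, ?_⟩
  · ext i j
    fin_cases i <;> fin_cases j <;> simp [hr₀, hp₀, hq₀, hs₀]
  · ext i j : 1
    fin_cases i <;> fin_cases j <;> simp [derivativeFun]
    · linear_combination hr
    · linear_combination hp
    · linear_combination hq
    · linear_combination hs
end

section
/- Let G : ℂ → ℂ be analytic on a neighborhood of 0 ∈ ℂ and let c ∈ ℂ with c ≠ 0. Suppose that G((u₁ + c·u₂)·u₂) = G(u₁·u₂) for all (u₁,u₂) in a neighborhood of the origin in ℂ². Then G is constant on a neighborhood of 0. -/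
/-!
On the line `u₁ = 0` the invariance reads `G (c u₂²) = G 0`, and `u₂ ↦ c u₂²` is a
non-constant analytic map, hence open at `0` by the open mapping theorem,
so `G` takes the value `G 0` on a whole neighbourhood of `0`.
-/

open Filter Topology

theorem nhds_zero_le_map_const_mul_pow {c : ℂ} (hc : c ≠ 0) {n : ℕ} (hn : n ≠ 0) :
    𝓝 0 ≤ map (fun u : ℂ => c * u ^ n) (𝓝 0) := by
  have hf : AnalyticAt ℂ (fun u : ℂ => c * u ^ n) 0 := by fun_prop
  refine (hf.eventually_constant_or_nhds_le_map_nhds.resolve_left fun hconst => ?_).trans_eq' ?_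
  · obtain ⟨u, hu, hu0⟩ := (eventually_nhdsWithin_of_eventually_nhds hconst).and
      self_mem_nhdsWithin |>.exists (f := 𝓝[≠] (0 : ℂ))
    simp_all
  · simp [hn]

theorem stmt8_general (G : ℂ → ℂ) (c : ℂ) (hc : c ≠ 0)
    (hinv : ∀ᶠ p : ℂ × ℂ in nhds (0 : ℂ × ℂ),
      G ((p.1 + c * p.2) * p.2) = G (p.1 * p.2)) :
    ∃ W : Set ℂ, IsOpen W ∧ (0 : ℂ) ∈ W ∧ ∀ z ∈ W, G z = G 0 := by
  have hline : ∀ᶠ u : ℂ in 𝓝 0, G (c * u ^ 2) = G 0 := by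
    have : Tendsto (fun u : ℂ => ((0 : ℂ), u)) (𝓝 0) (𝓝 0) := by
      rw [← Prod.mk_zero_zero]
      exact (continuous_const.prodMk continuous_id).tendsto 0
    filter_upwards [this.eventually hinv] with u hu
    simpa [sq, mul_assoc] using hu
  obtain ⟨W, hWG, hWo, hW0⟩ := eventually_nhds_iff.mp <|
    nhds_zero_le_map_const_mul_pow hc two_ne_zero <|
      (eventually_map (P := fun z => G z = G 0)).mpr hline
  exact ⟨W, hWo, hW0, hWG⟩

/-- if `G : ℂ → ℂ` is analytic on a neighborhood of `0`, `c ≠ 0`,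
and `G ((u₁ + c·u₂)·u₂) = G (u₁·u₂)` for all `(u₁, u₂)` in a neighborhood of
the origin of `ℂ²`, then `G` is constant on a neighborhood of `0`. -/
theorem stmt8 (G : ℂ → ℂ) (c : ℂ) (hc : c ≠ 0)
    (hG : ∃ V : Set ℂ, IsOpen V ∧ (0 : ℂ) ∈ V ∧ AnalyticOnNhd ℂ G V)
    (hinv : ∀ᶠ p : ℂ × ℂ in nhds (0 : ℂ × ℂ),
      G ((p.1 + c * p.2) * p.2) = G (p.1 * p.2)) :
    ∃ W : Set ℂ, IsOpen W ∧ (0 : ℂ) ∈ W ∧ ∀ z ∈ W, G z = G 0 :=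
  stmt8_general G c hc hinv
end
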